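/- arXiv:math/0604005 — 2 statements merged into one kernel-verified Lean document; each statement's English description precedes it below -/
import Mathlib

section
/- Let X = x ∂/∂u + y ∂/∂v and P = p ∂/∂u + q ∂/∂v be continuously differentiable vector fields on ℝ² and let λ : ℝ² → ℝ be a function such that the Lie bracket satisfies [P,X] = λ·X, i.e. P(x) − X(p) = λ·x and P(y) − X(q) = λ·y everywhere. Then the function W := x·q − y·p satisfies X(W) = (div X)·W everywhere, where X(h) = x·∂_u h + y·∂_v h and div X = ∂_u x + ∂_v y. -/
/-! By the Leibniz rule, `X(W) = X(x)·b + x·X(b) − X(y)·a − y·X(a)`. The bracket relations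
replace `X(a)` and `X(b)` by `P(x) − l·x` and `P(y) − l·y`; the `l`-terms cancel, and in
`X(x)·b − X(y)·a + x·P(y) − y·P(x)` the mixed terms cancel as well, leaving `(div X)·W`. -/

theorem fderiv_mul_sub_mul_apply {E : Type*} [NormedAddCommGroup E] [NormedSpace ℝ E]
    {f g h k : E → ℝ} {p : E} (hf : DifferentiableAt ℝ f p) (hg : DifferentiableAt ℝ g p)
    (hh : DifferentiableAt ℝ h p) (hk : DifferentiableAt ℝ k p) (v : E) :
    fderiv ℝ (fun q => f q * g q - h q * k q) p v =
      f p * fderiv ℝ g p v + g p * fderiv ℝ f p v -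
        (h p * fderiv ℝ k p v + k p * fderiv ℝ h p v) := by
  rw [((hf.hasFDerivAt.fun_mul hg.hasFDerivAt).fun_sub
    (hh.hasFDerivAt.fun_mul hk.hasFDerivAt)).fderiv]
  rfl

/-- If `P = (a, b)` is an infinitesimal symmetry of `X = (x, y)`, i.e.
`[P, X] = l • X` componentwise, then `W = x·b − y·a` satisfies
`X(W) = (div X) · W`. -/
theorem stmt_4 (x y a b l : ℝ × ℝ → ℝ)
    (hx : ContDiff ℝ 1 x) (hy : ContDiff ℝ 1 y)
    (ha : ContDiff ℝ 1 a) (hb : ContDiff ℝ 1 b)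
    -- P(x) − X(a) = l·x
    (h1 : ∀ p : ℝ × ℝ,
      (a p * fderiv ℝ x p (1, 0) + b p * fderiv ℝ x p (0, 1)) -
        (x p * fderiv ℝ a p (1, 0) + y p * fderiv ℝ a p (0, 1)) = l p * x p)
    -- P(y) − X(b) = l·y
    (h2 : ∀ p : ℝ × ℝ,
      (a p * fderiv ℝ y p (1, 0) + b p * fderiv ℝ y p (0, 1)) -
        (x p * fderiv ℝ b p (1, 0) + y p * fderiv ℝ b p (0, 1)) = l p * y p) :
    ∀ p : ℝ × ℝ,
      x p * fderiv ℝ (fun q => x q * b q - y q * a q) p (1, 0) +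
        y p * fderiv ℝ (fun q => x q * b q - y q * a q) p (0, 1) =
      (fderiv ℝ x p (1, 0) + fderiv ℝ y p (0, 1)) *
        (x p * b p - y p * a p) := by
  intro p
  have leibniz := fderiv_mul_sub_mul_apply (hx.differentiable one_ne_zero p)
    (hb.differentiable one_ne_zero p) (hy.differentiable one_ne_zero p)
    (ha.differentiable one_ne_zero p)
  rw [leibniz, leibniz]
  linear_combination y p * h1 p - x p * h2 p
end

section
/- Let A be a symmetric real 3×3 matrix and p = (p₁,p₂,p₃) ∈ ℝ³. Let S(p) be the antisymmetric matrix with rows (0, −p₃, p₂), (p₃, 0, −p₁), (−p₂, p₁, 0), and set B := A·S(p). Let ε be the determinant of the 4×4 bordered matrix whose upper-left 3×3 block is A, whose last column is (p₁,p₂,p₃,0)ᵀ and whose last row is (p₁,p₂,p₃,0). Then tr B = 0, det B = 0, and B³ = ε·B. -/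
/-!
`B = A S(p)` is traceless because `A` is symmetric and `S(p)` is skew, and singular because
`det S(p) = 0`. By Cayley–Hamilton, `B³ = -c₂(B) B` with `c₂(B) = tr (adj B)`. Since
`adj S(p) = p pᵀ`, we get `tr (adj B) = tr (adj S(p) adj A) = pᵀ (adj A) p`, while expanding the
bordered determinant gives `ε = -pᵀ (adj A) p`.
-/

namespace Matrix

variable {R : Type*} [CommRing R]

theorem trace_mul_eq_zero_of_isSymm_of_transpose_eq_neg [NoZeroDivisors R] [CharZero R]
    {n : Type*} [Fintype n] {A S : Matrix n n R} (hA : A.IsSymm) (hS : Sᵀ = -S) :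
    (A * S).trace = 0 := by
  rw [← CharZero.neg_eq_self_iff]
  calc -(A * S).trace = (Sᵀ * Aᵀ).trace := by rw [hS, hA.eq, neg_mul, trace_neg, trace_mul_comm]
    _ = (A * S).trace := by rw [← transpose_mul, trace_transpose]

theorem pow_three_fin_three (M : Matrix (Fin 3) (Fin 3) R) :
    M ^ 3 = M.trace • M ^ 2 - M.adjugate.trace • M + M.det • 1 := by
  ext i j
  fin_cases i <;> fin_cases j <;>
    simp [pow_succ, mul_apply, Fin.sum_univ_three, trace_fin_three, adjugate_fin_three,
      det_fin_three] <;> ring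

theorem det_border_fin_three (A : Matrix (Fin 3) (Fin 3) R) (p : Fin 3 → R) :
    !![A 0 0, A 0 1, A 0 2, p 0;
       A 1 0, A 1 1, A 1 2, p 1;
       A 2 0, A 2 1, A 2 2, p 2;
       p 0,   p 1,   p 2,   0].det = -(p ⬝ᵥ A.adjugate *ᵥ p) := by
  simp [det_succ_row_zero, Fin.sum_univ_succ, adjugate_fin_three,
    Fin.succAbove, dotProduct, mulVec]
  ring

def crossMatrix (p : Fin 3 → R) : Matrix (Fin 3) (Fin 3) R :=
  !![0, -p 2, p 1; p 2, 0, -p 0; -p 1, p 0, 0]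

theorem transpose_crossMatrix (p : Fin 3 → R) : (crossMatrix p)ᵀ = -crossMatrix p := by
  ext i j; fin_cases i <;> fin_cases j <;> simp [crossMatrix]

theorem det_crossMatrix (p : Fin 3 → R) : (crossMatrix p).det = 0 := by
  simp [crossMatrix, det_fin_three]; ring

theorem adjugate_crossMatrix (p : Fin 3 → R) : (crossMatrix p).adjugate = vecMulVec p p := by
  ext i j
  fin_cases i <;> fin_cases j <;> simp [crossMatrix, adjugate_fin_three, vecMulVec_apply] <;> ring

theorem trace_adjugate_mul_crossMatrix (A : Matrix (Fin 3) (Fin 3) R) (p : Fin 3 → R) :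
    (A * crossMatrix p).adjugate.trace = p ⬝ᵥ A.adjugate *ᵥ p := by
  rw [adjugate_mul_distrib, adjugate_crossMatrix, vecMulVec_mul, trace_vecMulVec,
    dotProduct_mulVec, dotProduct_comm]

end Matrix

/-- For a symmetric `3×3` matrix `A` and `p ∈ ℝ³`, the matrix
`B = A · S(p)` (with `S(p)` the antisymmetric matrix of `p`) satisfies
`tr B = 0`, `det B = 0` and `B³ = ε • B`, where `ε` is the bordered
determinant of `(A, p)`. -/
theorem stmt_13 (A : Matrix (Fin 3) (Fin 3) ℝ) (hA : A.IsSymm)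
    (p₁ p₂ p₃ : ℝ) :
    let S : Matrix (Fin 3) (Fin 3) ℝ := !![0, -p₃, p₂; p₃, 0, -p₁; -p₂, p₁, 0]
    let B : Matrix (Fin 3) (Fin 3) ℝ := A * S
    let ε : ℝ := Matrix.det
      !![A 0 0, A 0 1, A 0 2, p₁;
         A 1 0, A 1 1, A 1 2, p₂;
         A 2 0, A 2 1, A 2 2, p₃;
         p₁,    p₂,    p₃,    0]
    B.trace = 0 ∧ B.det = 0 ∧ B ^ 3 = ε • B := by
  intro S B ε
  let p : Fin 3 → ℝ := ![p₁, p₂, p₃]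
  have hS : S = Matrix.crossMatrix p := rfl
  have hε : ε = -(p ⬝ᵥ A.adjugate.mulVec p) := Matrix.det_border_fin_three A p
  have htrace : B.trace = 0 :=
    Matrix.trace_mul_eq_zero_of_isSymm_of_transpose_eq_neg hA (Matrix.transpose_crossMatrix p)
  have hdet : B.det = 0 := by rw [Matrix.det_mul, hS, Matrix.det_crossMatrix, mul_zero]
  refine ⟨htrace, hdet, ?_⟩
  have hadj : B.adjugate.trace = -ε := by
    rw [hε, neg_neg]
    exact Matrix.trace_adjugate_mul_crossMatrix A p
  rw [Matrix.pow_three_fin_three, htrace, hdet, hadj]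
  simp
end
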